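/- (Corollary 1, identity.) Under the random coin toss assumption, Assumption 3, and Assumption 4, the conditional probability that the first three children all have the same sex, given that the family has at least 3 children, equals μ((A ∩ B ∩ C) ∪ (Aᶜ ∩ Bᶜ ∩ Cᶜ) | N3) = (p_M^3 + p_F^3) · 1/(2·p_F·p_M·(p_D/p_S) + p_F^2 + p_M^2). -/
import Mathlib

open MeasureTheory

/-- Conditional probability: μ(X | Y) = μ(X ∩ Y) / μ(Y), as a real number. -/
noncomputable def cp {Ω : Type*} [MeasurableSpace Ω] (μ : Measure Ω) (X Y : Set Ω) : ℝ :=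
  (μ (X ∩ Y)).toReal / (μ Y).toReal

lemma split_aux {Ω : Type*} [MeasurableSpace Ω] (μ : Measure Ω) [IsFiniteMeasure μ]
    {T : Set Ω} (hT : MeasurableSet T) (S : Set Ω) :
    (μ (S ∩ T)).toReal + (μ (S ∩ Tᶜ)).toReal = (μ S).toReal := by
  rw [← ENNReal.toReal_add (measure_ne_top _ _) (measure_ne_top _ _), ← Set.diff_eq,
    measure_inter_add_diff S hT]

lemma cp_mul {Ω : Type*} [MeasurableSpace Ω] (μ : Measure Ω) (X Y : Set Ω)
    (h : 0 < (μ Y).toReal) : (μ (X ∩ Y)).toReal = cp μ X Y * (μ Y).toReal := by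
  rw [cp]; field_simp
/-- Corollary 1, identity: under the random coin toss assumption,
Assumption 3, and Assumption 4,
μ((A∩B∩C) ∪ (Aᶜ∩Bᶜ∩Cᶜ) | N3) = (p_M³ + p_F³) · 1/(2·p_F·p_M·(p_D/p_S) + p_F² + p_M²). -/
theorem stmt_5 {Ω : Type*} [MeasurableSpace Ω] (μ : Measure Ω) [IsProbabilityMeasure μ]
(A B C N2 N3 : Set Ω)
    (hAm : MeasurableSet A) (hBm : MeasurableSet B) (hCm : MeasurableSet C)
    (hN2m : MeasurableSet N2) (hN3m : MeasurableSet N3)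
    (hsub : N3 ⊆ N2)
    (pM pF : ℝ) (hpM0 : 0 < pM) (hpM1 : pM < 1) (hpF : pF = 1 - pM)
    -- Assumption 1 (random coin toss):
    (h1 : (μ A).toReal = pM)
    (h2a : cp μ B (N2 ∩ A) = pM) (h2b : cp μ B (N2 ∩ Aᶜ) = pM)
    (h3a : cp μ C (N3 ∩ (A ∩ B)) = pM) (h3b : cp μ C (N3 ∩ (A ∩ Bᶜ)) = pM)
    (h3c : cp μ C (N3 ∩ (Aᶜ ∩ B)) = pM) (h3d : cp μ C (N3 ∩ (Aᶜ ∩ Bᶜ)) = pM)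
    -- Assumption 3:
    (h3' : cp μ N2 A = (μ N2).toReal)
    -- Assumption 4:
    (pS pD : ℝ) (hpS0 : 0 < pS) (hpS1 : pS ≤ 1) (hpD0 : 0 < pD) (hpD1 : pD ≤ 1)
    (h4a : cp μ N3 (N2 ∩ A ∩ B) = pS) (h4b : cp μ N3 (N2 ∩ Aᶜ ∩ Bᶜ) = pS)
    (h4c : cp μ N3 (N2 ∩ A ∩ Bᶜ) = pD) (h4d : cp μ N3 (N2 ∩ Aᶜ ∩ B) = pD)
    -- positivity of all conditioning events appearing:
    (posA : 0 < (μ A).toReal) (posN2 : 0 < (μ N2).toReal) (posN3 : 0 < (μ N3).toReal)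
    (posN2A : 0 < (μ (N2 ∩ A)).toReal) (posN2Ac : 0 < (μ (N2 ∩ Aᶜ)).toReal)
    (posN2AB : 0 < (μ (N2 ∩ A ∩ B)).toReal) (posN2AcBc : 0 < (μ (N2 ∩ Aᶜ ∩ Bᶜ)).toReal)
    (posN2ABc : 0 < (μ (N2 ∩ A ∩ Bᶜ)).toReal) (posN2AcB : 0 < (μ (N2 ∩ Aᶜ ∩ B)).toReal)
    (posN3AB : 0 < (μ (N3 ∩ (A ∩ B))).toReal) (posN3ABc : 0 < (μ (N3 ∩ (A ∩ Bᶜ))).toReal)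
    (posN3AcB : 0 < (μ (N3 ∩ (Aᶜ ∩ B))).toReal) (posN3AcBc : 0 < (μ (N3 ∩ (Aᶜ ∩ Bᶜ))).toReal) :
    cp μ ((A ∩ B ∩ C) ∪ (Aᶜ ∩ Bᶜ ∩ Cᶜ)) N3 =
      (pM ^ 3 + pF ^ 3) * (1 / (2 * pF * pM * (pD / pS) + pF ^ 2 + pM ^ 2)) := by
  subst hpF
  set n2 := (μ N2).toReal with hn2
  -- μ(N2∩A) = n2 * pM
  have e1 : (μ (N2 ∩ A)).toReal = n2 * pM := by
    have := cp_mul μ N2 A posA; rw [h3', h1] at this; linarith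
  have e2 : (μ (N2 ∩ Aᶜ)).toReal = n2 * (1 - pM) := by
    have := split_aux μ hAm N2; linear_combination this - e1
  have e3 : (μ (N2 ∩ A ∩ B)).toReal = n2 * pM * pM := by
    have := cp_mul μ B (N2 ∩ A) posN2A; rw [h2a] at this
    have hset : B ∩ (N2 ∩ A) = N2 ∩ A ∩ B := by ext x; simp [Set.mem_inter_iff]; tauto
    rw [hset] at this; rw [this, e1]; ring
  have e4 : (μ (N2 ∩ A ∩ Bᶜ)).toReal = n2 * pM * (1 - pM) := by
    have := split_aux μ hBm (N2 ∩ A); linear_combination this - e3 + e1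
  have e5 : (μ (N2 ∩ Aᶜ ∩ B)).toReal = n2 * (1 - pM) * pM := by
    have := cp_mul μ B (N2 ∩ Aᶜ) posN2Ac; rw [h2b] at this
    have hset : B ∩ (N2 ∩ Aᶜ) = N2 ∩ Aᶜ ∩ B := by ext x; simp [Set.mem_inter_iff]; tauto
    rw [hset] at this; rw [this, e2]; ring
  have e6 : (μ (N2 ∩ Aᶜ ∩ Bᶜ)).toReal = n2 * (1 - pM) * (1 - pM) := by
    have := split_aux μ hBm (N2 ∩ Aᶜ); linear_combination this - e5 + e2
  -- N3 pieces
  have hs1 : N3 ∩ (N2 ∩ A ∩ B) = N3 ∩ (A ∩ B) := by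
    ext x; simp only [Set.mem_inter_iff]
    exact ⟨fun ⟨h3, ⟨_, ha⟩, hb⟩ => ⟨h3, ha, hb⟩, fun ⟨h3, ha, hb⟩ => ⟨h3, ⟨hsub h3, ha⟩, hb⟩⟩
  have hs2 : N3 ∩ (N2 ∩ A ∩ Bᶜ) = N3 ∩ (A ∩ Bᶜ) := by
    ext x; simp only [Set.mem_inter_iff]
    exact ⟨fun ⟨h3, ⟨_, ha⟩, hb⟩ => ⟨h3, ha, hb⟩, fun ⟨h3, ha, hb⟩ => ⟨h3, ⟨hsub h3, ha⟩, hb⟩⟩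
  have hs3 : N3 ∩ (N2 ∩ Aᶜ ∩ B) = N3 ∩ (Aᶜ ∩ B) := by
    ext x; simp only [Set.mem_inter_iff]
    exact ⟨fun ⟨h3, ⟨_, ha⟩, hb⟩ => ⟨h3, ha, hb⟩, fun ⟨h3, ha, hb⟩ => ⟨h3, ⟨hsub h3, ha⟩, hb⟩⟩
  have hs4 : N3 ∩ (N2 ∩ Aᶜ ∩ Bᶜ) = N3 ∩ (Aᶜ ∩ Bᶜ) := by
    ext x; simp only [Set.mem_inter_iff]
    exact ⟨fun ⟨h3, ⟨_, ha⟩, hb⟩ => ⟨h3, ha, hb⟩, fun ⟨h3, ha, hb⟩ => ⟨h3, ⟨hsub h3, ha⟩, hb⟩⟩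
  have f1 : (μ (N3 ∩ (A ∩ B))).toReal = pS * (n2 * pM * pM) := by
    have := cp_mul μ N3 (N2 ∩ A ∩ B) posN2AB; rw [h4a, hs1] at this; rw [this, e3]
  have f2 : (μ (N3 ∩ (A ∩ Bᶜ))).toReal = pD * (n2 * pM * (1 - pM)) := by
    have := cp_mul μ N3 (N2 ∩ A ∩ Bᶜ) posN2ABc; rw [h4c, hs2] at this; rw [this, e4]
  have f3 : (μ (N3 ∩ (Aᶜ ∩ B))).toReal = pD * (n2 * (1 - pM) * pM) := by
    have := cp_mul μ N3 (N2 ∩ Aᶜ ∩ B) posN2AcB; rw [h4d, hs3] at this; rw [this, e5]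
  have f4 : (μ (N3 ∩ (Aᶜ ∩ Bᶜ))).toReal = pS * (n2 * (1 - pM) * (1 - pM)) := by
    have := cp_mul μ N3 (N2 ∩ Aᶜ ∩ Bᶜ) posN2AcBc; rw [h4b, hs4] at this; rw [this, e6]
  -- total of N3
  have g0 : (μ N3).toReal = (μ (N3 ∩ (A ∩ B))).toReal + (μ (N3 ∩ (A ∩ Bᶜ))).toReal
      + (μ (N3 ∩ (Aᶜ ∩ B))).toReal + (μ (N3 ∩ (Aᶜ ∩ Bᶜ))).toReal := by
    have t1 := split_aux μ hAm N3
    have t2 := split_aux μ hBm (N3 ∩ A)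
    have t3 := split_aux μ hBm (N3 ∩ Aᶜ)
    rw [Set.inter_assoc, Set.inter_assoc] at t2 t3
    linarith
  have gN3 : (μ N3).toReal = n2 * (pS * (pM * pM + (1 - pM) * (1 - pM)) + 2 * pD * pM * (1 - pM)) := by
    rw [g0, f1, f2, f3, f4]; ring
  -- third-level
  have k1 : (μ ((A ∩ B ∩ C) ∩ N3)).toReal = pM * (pS * (n2 * pM * pM)) := by
    have := cp_mul μ C (N3 ∩ (A ∩ B)) posN3AB; rw [h3a] at this
    have hset : C ∩ (N3 ∩ (A ∩ B)) = (A ∩ B ∩ C) ∩ N3 := by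
      ext x; simp [Set.mem_inter_iff]; tauto
    rw [hset] at this; rw [this, f1]
  have k2 : (μ ((Aᶜ ∩ Bᶜ ∩ Cᶜ) ∩ N3)).toReal = (1 - pM) * (pS * (n2 * (1 - pM) * (1 - pM))) := by
    have hc := cp_mul μ C (N3 ∩ (Aᶜ ∩ Bᶜ)) posN3AcBc; rw [h3d] at hc
    have hsp := split_aux μ hCm (N3 ∩ (Aᶜ ∩ Bᶜ))
    have hset1 : C ∩ (N3 ∩ (Aᶜ ∩ Bᶜ)) = N3 ∩ (Aᶜ ∩ Bᶜ) ∩ C := by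
      ext x; simp [Set.mem_inter_iff]; tauto
    have hset2 : N3 ∩ (Aᶜ ∩ Bᶜ) ∩ Cᶜ = (Aᶜ ∩ Bᶜ ∩ Cᶜ) ∩ N3 := by
      ext x; simp [Set.mem_inter_iff]; tauto
    rw [hset1] at hc; rw [hset2] at hsp; linear_combination hsp - hc + (1 - pM) * f4
  -- numerator
  have hdisj : Disjoint (A ∩ B ∩ C) (Aᶜ ∩ Bᶜ ∩ Cᶜ) := by
    rw [Set.disjoint_iff_inter_eq_empty]; ext x; simp [Set.mem_inter_iff]; tauto
  have hnum : (μ (((A ∩ B ∩ C) ∪ (Aᶜ ∩ Bᶜ ∩ Cᶜ)) ∩ N3)).toReal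
      = (μ ((A ∩ B ∩ C) ∩ N3)).toReal + (μ ((Aᶜ ∩ Bᶜ ∩ Cᶜ) ∩ N3)).toReal := by
    rw [Set.union_inter_distrib_right,
      measure_union (hdisj.mono Set.inter_subset_left Set.inter_subset_left)
        (((hAm.compl.inter hBm.compl).inter hCm.compl).inter hN3m),
      ENNReal.toReal_add (measure_ne_top _ _) (measure_ne_top _ _)]
  -- finish
  rw [cp, hnum, k1, k2, gN3]
  have hpF0 : 0 < 1 - pM := by linarith
  have hden : 0 < pS * (pM * pM + (1-pM) * (1-pM)) + 2 * pD * pM * (1-pM) := by positivity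
  have hden2 : 0 < 2 * (1-pM) * pM * (pD / pS) + (1-pM) ^ 2 + pM ^ 2 := by positivity
  field_simp
  ring
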